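/- Energy of bound states when β = 0: Let d ≥ 1, γ₁, γ₂ > 0, ω ∈ ℝ, β = 0, and let P, Q : ℝ^{d+1} → ℝ be real-valued Schwartz functions solving −ωP + Δ_{γ₁}P + PQ = 0 and −4ωQ + Δ_{γ₂}Q + ½P² = 0 pointwise. Then E(P,Q) = ((d−3)/(2(d+1))) ∫_{ℝ^{d+1}} (|∇P|²_{γ₁} + |∇Q|²_{γ₂}) dx. In particular, if d = 3 then E(P,Q) = 0 and ∫_{ℝ⁴} (|∇P|²_{γ₁} + |∇Q|²_{γ₂}) dx = ∫_{ℝ⁴} P²Q dx. -/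

import Mathlib

noncomputable section

open MeasureTheory Complex Finset

/-- The underlying space `ℝ^{d+1}`. -/
abbrev Sp (d : ℕ) := EuclideanSpace ℝ (Fin (d + 1))

variable {d : ℕ}

/-- Partial derivative in the `j`-th coordinate direction. -/
def pdv {F : Type*} [NormedAddCommGroup F] [NormedSpace ℝ F]
    (j : Fin (d + 1)) (f : Sp d → F) (x : Sp d) : F :=
  fderiv ℝ f x (EuclideanSpace.single j 1)

/-- Anisotropic gradient square `|∇f|²_γ = Σ_{j=1}^d |∂_j f|² + γ|∂_{d+1} f|²`. -/
def gradSq {F : Type*} [NormedAddCommGroup F] [NormedSpace ℝ F]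
    (γ : ℝ) (f : Sp d → F) (x : Sp d) : ℝ :=
  (∑ j : Fin d, ‖pdv j.castSucc f x‖ ^ 2) + γ * ‖pdv (Fin.last d) f x‖ ^ 2

/-- Full (isotropic) gradient square `|∇f|² = Σ_{j=1}^{d+1} |∂_j f|²`. -/
def fullGradSq {F : Type*} [NormedAddCommGroup F] [NormedSpace ℝ F]
    (f : Sp d → F) (x : Sp d) : ℝ :=
  ∑ j : Fin (d + 1), ‖pdv j f x‖ ^ 2

/-- Transverse gradient square `|∇_⊥ f|² = Σ_{j=1}^{d} |∂_j f|²`. -/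
def perpGradSq {F : Type*} [NormedAddCommGroup F] [NormedSpace ℝ F]
    (f : Sp d → F) (x : Sp d) : ℝ :=
  ∑ j : Fin d, ‖pdv j.castSucc f x‖ ^ 2

/-- Anisotropic Laplacian `Δ_γ = ∂²_{x₁} + … + ∂²_{x_d} + γ ∂²_{x_{d+1}}`. -/
def lap {F : Type*} [NormedAddCommGroup F] [NormedSpace ℝ F]
    (γ : ℝ) (f : Sp d → F) (x : Sp d) : F :=
  (∑ j : Fin d, pdv j.castSucc (fun y => pdv j.castSucc f y) x)
    + γ • pdv (Fin.last d) (fun y => pdv (Fin.last d) f y) x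

/-- Mass `M(u,v) = ∫ (|u|² + 4|v|²)`. -/
def mass (u v : Sp d → ℂ) : ℝ :=
  ∫ x : Sp d, (‖u x‖ ^ 2 + 4 * ‖v x‖ ^ 2)

/-- Energy `E(u,v) = ½∫ (|∇u|²_{γ₁} + |∇v|²_{γ₂} + β|v|² − Re(ū²v))`. -/
def energy (γ₁ γ₂ β : ℝ) (u v : Sp d → ℂ) : ℝ :=
  (1 / 2) * ∫ x : Sp d,
    (gradSq γ₁ u x + gradSq γ₂ v x + β * ‖v x‖ ^ 2 - ((starRingEnd ℂ) (u x) ^ 2 * v x).re)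

/-- `J(u,v) = Re ∫ ū² v`. -/
def Jfun (u v : Sp d → ℂ) : ℝ :=
  ∫ x : Sp d, ((starRingEnd ℂ) (u x) ^ 2 * v x).re

/-- `K(u,v) = ∫ (|∇u|²_{γ₁} + |∇v|²_{γ₂})`. -/
def Kfun (γ₁ γ₂ : ℝ) (u v : Sp d → ℂ) : ℝ :=
  ∫ x : Sp d, (gradSq γ₁ u x + gradSq γ₂ v x)

/-- `x^γ · ∇f` where `x^γ = (x₁,…,x_d, γ x_{d+1})`. -/
def xgDot (γ : ℝ) (f : Sp d → ℂ) (x : Sp d) : ℂ :=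
  (∑ j : Fin d, (x j.castSucc : ℂ) * pdv j.castSucc f x)
    + ((γ * x (Fin.last d) : ℝ) : ℂ) * pdv (Fin.last d) f x

/-- `x_⊥ · ∇_⊥ f`. -/
def perpDot (f : Sp d → ℂ) (x : Sp d) : ℂ :=
  ∑ j : Fin d, (x j.castSucc : ℂ) * pdv j.castSucc f x

/-- `|x_⊥|²`. -/
def perpNormSq (x : Sp d) : ℝ := ∑ j : Fin d, (x j.castSucc) ^ 2

/-- Energy for real-valued pairs with `β = 0`:
`E(P,Q) = ½∫ (|∇P|²_{γ₁} + |∇Q|²_{γ₂} − P²Q)`. -/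
def energyR (γ₁ γ₂ : ℝ) (P Q : Sp d → ℝ) : ℝ :=
  (1 / 2) * ∫ x : Sp d, (gradSq γ₁ P x + gradSq γ₂ Q x - (P x) ^ 2 * Q x)

/-- Gagliardo–Nirenberg quotient `GN(u,v) = M^{3/2-(d+1)/4} K^{(d+1)/4} / J`. -/
def GNq (γ₁ γ₂ : ℝ) (u v : Sp d → ℂ) : ℝ :=
  mass u v ^ ((3 : ℝ) / 2 - ((d : ℝ) + 1) / 4)
    * Kfun γ₁ γ₂ u v ^ (((d : ℝ) + 1) / 4) / Jfun u v

/-!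
Test the first equation against `P` and `x · ∇P` and the second against `Q` and `x · ∇Q`
(Nehari and Pohozaev identities). Integrating by parts, `∫ f ∂_v² f = -∫ (∂_v f)²` and
`∫ (x · ∇f) ∂_v² f = (N/2 - 1) ∫ (∂_v f)²` in dimension `N = d + 1`, for each direction `v`
separately, so the anisotropy is harmless; the Euler-field terms of the nonlinearity add up to
`∫ x · ∇(P² Q) = -N ∫ P² Q`. Eliminating `ω` from the four identities leaves the virial identity
`N ∫ P² Q = 4 ∫ (|∇P|²_{γ₁} + |∇Q|²_{γ₂})`, and substituting it into `E = ½ ∫ (|∇P|²_{γ₁} +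
|∇Q|²_{γ₂}) - ½ ∫ P² Q` gives the formula.
-/

open LineDeriv Module

namespace SchwartzMap

variable {E : Type*} [NormedAddCommGroup E] [NormedSpace ℝ E]

instance : Mul 𝓢(E, ℝ) := ⟨fun f g => pairing (ContinuousLinearMap.mul ℝ ℝ) f g⟩

@[simp]
theorem mul_apply (f g : 𝓢(E, ℝ)) (x : E) : (f * g) x = f x * g x := rfl

def euler : 𝓢(E, ℝ) →L[ℝ] 𝓢(E, ℝ) :=
  bilinLeftCLM (.id ℝ (E →L[ℝ] ℝ)) (ContinuousLinearMap.id ℝ E).hasTemperateGrowth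
    ∘L fderivCLM ℝ E ℝ

theorem euler_apply (f : 𝓢(E, ℝ)) (x : E) : euler f x = fderiv ℝ f x x := rfl

theorem euler_mul (f g : 𝓢(E, ℝ)) : euler (f * g) = euler f * g + f * euler g := by
  ext x
  simp only [euler_apply, add_apply, mul_apply]
  rw [show ⇑(f * g) = fun y => f y * g y from rfl,
    fderiv_fun_mul f.differentiableAt g.differentiableAt]
  simp only [add_apply, smul_apply, smul_eq_mul]
  ring

theorem lineDerivOp_euler (v : E) (f : 𝓢(E, ℝ)) :
    ∂_{v} (euler f) = ∂_{v} f + euler (∂_{v} f) := by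
  ext x
  have hf' : Differentiable ℝ (fderiv ℝ f) := (fderivCLM ℝ E ℝ f).differentiable
  have hsymm := (f.smooth 2).contDiffAt.isSymmSndFDerivAt (x := x) (by simp) v x
  change fderiv ℝ (fun y => fderiv ℝ f y y) x v
    = fderiv ℝ f x v + fderiv ℝ (fun y => fderiv ℝ f y v) x x
  rw [fderiv_clm_apply (hf' x) differentiableAt_fun_id,
    fderiv_clm_apply (hf' x) (differentiableAt_const v)]
  simp [hsymm]

variable [FiniteDimensional ℝ E] [MeasurableSpace E] [BorelSpace E]
  {μ : Measure E} [μ.IsAddHaarMeasure]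

theorem integrable_clm_mul (ℓ : E →L[ℝ] ℝ) (g : 𝓢(E, ℝ)) :
    Integrable (fun x => ℓ x * g x) μ :=
  (smulLeftCLM ℝ ℓ g).integrable.congr (.of_forall fun x => by simp [ℓ.hasTemperateGrowth])

theorem integral_clm_mul_lineDerivOp (ℓ : E →L[ℝ] ℝ) (v : E) (h : 𝓢(E, ℝ)) :
    ∫ x, ℓ x * ∂_{v} h x ∂μ = -(ℓ v * ∫ x, h x ∂μ) := by
  have := integral_mul_fderiv_eq_neg_fderiv_mul_of_integrable (μ := μ) (v := v)
    (by simpa using (h.integrable (μ := μ)).const_mul (ℓ v)) (integrable_clm_mul ℓ (∂_{v} h))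
    (integrable_clm_mul ℓ h) (fun x _ => ℓ.differentiableAt) (fun x _ => h.differentiableAt)
  simpa [lineDerivOp_apply_eq_fderiv, integral_const_mul] using this

theorem integral_euler (h : 𝓢(E, ℝ)) : ∫ x, euler h x ∂μ = -(finrank ℝ E * ∫ x, h x ∂μ) := by
  let b := finBasis ℝ E
  let ℓ (k : Fin (finrank ℝ E)) : E →L[ℝ] ℝ := (b.coord k).toContinuousLinearMap
  have hexpand (x : E) : euler h x = ∑ k, ℓ k x * ∂_{b k} h x := by
    conv_lhs => rw [euler_apply]; arg 2; rw [← b.sum_repr x]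
    simp only [map_sum, map_smul, smul_eq_mul, ℓ, LinearMap.coe_toContinuousLinearMap',
      Basis.coord_apply, lineDerivOp_apply_eq_fderiv]
  simp_rw [hexpand]
  rw [integral_finsetSum _ fun k _ => integrable_clm_mul (ℓ k) _,
    Finset.sum_congr rfl fun k _ => integral_clm_mul_lineDerivOp (ℓ k) (b k) h]
  simp [ℓ]

theorem integral_euler_mul_self (f : 𝓢(E, ℝ)) :
    ∫ x, euler f x * f x ∂μ = -(finrank ℝ E / 2 * ∫ x, f x * f x ∂μ) := by
  have h := integral_euler (μ := μ) (f * f)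
  have hpt (x : E) : euler (f * f) x = 2 * (euler f x * f x) := by
    simp only [euler_mul, add_apply, mul_apply]
    ring
  simp only [hpt, integral_const_mul, mul_apply] at h
  linarith

theorem integral_euler_mul_lineDerivOp_lineDerivOp (v : E) (f : 𝓢(E, ℝ)) :
    ∫ x, euler f x * ∂_{v} (∂_{v} f) x ∂μ
      = (finrank ℝ E / 2 - 1) * ∫ x, ∂_{v} f x * ∂_{v} f x ∂μ := by
  rw [integral_mul_lineDerivOp_right_eq_neg_left, lineDerivOp_euler]
  generalize ∂_{v} f = u
  simp only [add_apply, add_mul]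
  rw [integral_add (by exact (u * u).integrable) (by exact (euler u * u).integrable),
    integral_euler_mul_self]
  ring

theorem integral_euler_cubic (P Q : 𝓢(E, ℝ)) :
    2 * ∫ x, euler P x * (P x * Q x) ∂μ + ∫ x, euler Q x * (P x * P x) ∂μ
      = -(finrank ℝ E * ∫ x, P x * P x * Q x ∂μ) := by
  have h : euler (P * P * Q) = (2 : ℝ) • (euler P * (P * Q)) + euler Q * (P * P) := by
    ext x
    simp only [euler_mul, add_apply, smul_apply, mul_apply, smul_eq_mul]
    ring
  have := congrArg (integralCLM ℝ μ) h
  simp only [map_add, map_smul, integralCLM_apply, mul_apply, smul_eq_mul] at this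
  rw [← this, integral_euler]
  rfl

theorem integral_mul_combination_eq_zero {a b : ℝ} {f₁ f₂ f₃ : 𝓢(E, ℝ)}
    (h : ∀ x, a * f₁ x + f₂ x + b * f₃ x = 0) (g : 𝓢(E, ℝ)) :
    a * ∫ x, g x * f₁ x ∂μ + ∫ x, g x * f₂ x ∂μ + b * ∫ x, g x * f₃ x ∂μ = 0 := by
  have h0 : a • (g * f₁) + g * f₂ + b • (g * f₃) = 0 := by
    ext x
    simp only [add_apply, smul_apply, mul_apply, smul_eq_mul, zero_apply]
    linear_combination g x * h x
  simpa only [map_add, map_smul, map_zero, integralCLM_apply, mul_apply, smul_eq_mul]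
    using congrArg (integralCLM ℝ μ) h0

section Weighted

variable {ι : Type*} [Fintype ι]

def weightedLaplacian (c : ι → ℝ) (v : ι → E) (f : 𝓢(E, ℝ)) : 𝓢(E, ℝ) :=
  ∑ i, c i • ∂_{v i} (∂_{v i} f)

def weightedGradSq (c : ι → ℝ) (v : ι → E) (f : 𝓢(E, ℝ)) : 𝓢(E, ℝ) :=
  ∑ i, c i • (∂_{v i} f * ∂_{v i} f)

theorem integral_mul_weightedLaplacian (c : ι → ℝ) (v : ι → E) (g f : 𝓢(E, ℝ)) :
    ∫ x, g x * weightedLaplacian c v f x ∂μ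
      = ∑ i, c i * ∫ x, g x * ∂_{v i} (∂_{v i} f) x ∂μ := by
  simp only [weightedLaplacian, _root_.sum_apply, smul_apply, smul_eq_mul, Finset.mul_sum,
    mul_left_comm (g _)]
  rw [integral_finsetSum _ fun i _ => by
    exact (g * ∂_{v i} (∂_{v i} f)).integrable.const_mul (c i)]
  simp only [integral_const_mul]

theorem integral_weightedGradSq (c : ι → ℝ) (v : ι → E) (f : 𝓢(E, ℝ)) :
    ∫ x, weightedGradSq c v f x ∂μ = ∑ i, c i * ∫ x, ∂_{v i} f x * ∂_{v i} f x ∂μ := by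
  simp only [weightedGradSq, _root_.sum_apply, smul_apply, smul_eq_mul]
  rw [integral_finsetSum _ fun i _ => by
    exact (∂_{v i} f * ∂_{v i} f).integrable.const_mul (c i)]
  simp only [integral_const_mul, mul_apply]

theorem integral_mul_weightedLaplacian_self (c : ι → ℝ) (v : ι → E) (f : 𝓢(E, ℝ)) :
    ∫ x, f x * weightedLaplacian c v f x ∂μ = -∫ x, weightedGradSq c v f x ∂μ := by
  simp [integral_mul_weightedLaplacian, integral_weightedGradSq,
    integral_mul_lineDerivOp_right_eq_neg_left]

theorem integral_euler_mul_weightedLaplacian (c : ι → ℝ) (v : ι → E) (f : 𝓢(E, ℝ)) :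
    ∫ x, euler f x * weightedLaplacian c v f x ∂μ
      = (finrank ℝ E / 2 - 1) * ∫ x, weightedGradSq c v f x ∂μ := by
  simp [integral_mul_weightedLaplacian, integral_weightedGradSq, Finset.mul_sum,
    integral_euler_mul_lineDerivOp_lineDerivOp, mul_left_comm]

theorem finrank_mul_integral_eq_of_bound_state {ω : ℝ} {c₁ c₂ : ι → ℝ} {v : ι → E}
    {P Q : 𝓢(E, ℝ)}
    (hP : ∀ x, -ω * P x + weightedLaplacian c₁ v P x + P x * Q x = 0)
    (hQ : ∀ x, -(4 * ω) * Q x + weightedLaplacian c₂ v Q x + 1 / 2 * P x ^ 2 = 0) :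
    finrank ℝ E * ∫ x, P x ^ 2 * Q x ∂μ
      = 4 * ∫ x, weightedGradSq c₁ v P x + weightedGradSq c₂ v Q x ∂μ := by
  have hP' (x : E) : -ω * P x + weightedLaplacian c₁ v P x + 1 * (P * Q) x = 0 := by
    simpa using hP x
  have hQ' (x : E) : -(4 * ω) * Q x + weightedLaplacian c₂ v Q x + 1 / 2 * (P * P) x = 0 := by
    simpa [sq] using hQ x
  have nehariP := integral_mul_combination_eq_zero (μ := μ) hP' P
  have nehariQ := integral_mul_combination_eq_zero (μ := μ) hQ' Q
  have pohozaevP := integral_mul_combination_eq_zero (μ := μ) hP' (euler P)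
  have pohozaevQ := integral_mul_combination_eq_zero (μ := μ) hQ' (euler Q)
  have hcubic := integral_euler_cubic (μ := μ) P Q
  have hJP : ∫ x, P x * (P * Q) x ∂μ = ∫ x, P x * P x * Q x ∂μ := by
    simp only [mul_apply, mul_assoc]
  have hJQ : ∫ x, Q x * (P * P) x ∂μ = ∫ x, P x * P x * Q x ∂μ := by
    simp only [mul_apply, mul_comm (Q _)]
  rw [integral_mul_weightedLaplacian_self, hJP] at nehariP
  rw [integral_mul_weightedLaplacian_self, hJQ] at nehariQ
  rw [integral_euler_mul_weightedLaplacian, integral_euler_mul_self] at pohozaevP pohozaevQ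
  simp only [mul_apply] at pohozaevP pohozaevQ
  rw [integral_add (weightedGradSq c₁ v P).integrable (weightedGradSq c₂ v Q).integrable]
  simp only [sq]
  linear_combination 2 * (finrank ℝ E : ℝ) * (nehariP + nehariQ)
    + 4 * (pohozaevP + pohozaevQ) - 2 * hcubic

end Weighted

end SchwartzMap

open SchwartzMap

theorem lap_eq_weightedLaplacian (γ : ℝ) (f : 𝓢(Sp d, ℝ)) :
    lap γ ⇑f = ⇑(weightedLaplacian (Fin.lastCases γ fun _ => 1)
      (fun j => EuclideanSpace.single j 1) f) := by
  ext x
  simp only [lap, weightedLaplacian, Fin.sum_univ_castSucc, Fin.lastCases_castSucc,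
    Fin.lastCases_last, one_smul, add_apply, _root_.sum_apply, smul_apply, smul_eq_mul]
  rfl

theorem gradSq_eq_weightedGradSq (γ : ℝ) (f : 𝓢(Sp d, ℝ)) :
    gradSq γ ⇑f = ⇑(weightedGradSq (Fin.lastCases γ fun _ => 1)
      (fun j => EuclideanSpace.single j 1) f) := by
  ext x
  simp only [gradSq, Real.norm_eq_abs, sq, abs_mul_abs_self, weightedGradSq,
    Fin.sum_univ_castSucc, Fin.lastCases_castSucc, Fin.lastCases_last, one_smul, add_apply,
    _root_.sum_apply, SchwartzMap.mul_apply, smul_apply, smul_eq_mul]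
  rfl

theorem integrable_gradSq (γ : ℝ) (f : 𝓢(Sp d, ℝ)) : Integrable (gradSq γ ⇑f) := by
  rw [gradSq_eq_weightedGradSq]
  exact SchwartzMap.integrable _

theorem bound_state_energy_general
    (d : ℕ) (γ₁ γ₂ ω : ℝ)
    (P Q : SchwartzMap (Sp d) ℝ)
    (hP : ∀ x, -ω * P x + lap γ₁ (⇑P) x + P x * Q x = 0)
    (hQ : ∀ x, -(4 * ω) * Q x + lap γ₂ (⇑Q) x + (1 / 2) * (P x) ^ 2 = 0) :
    energyR γ₁ γ₂ (⇑P) (⇑Q)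
      = (((d : ℝ) - 3) / (2 * ((d : ℝ) + 1)))
          * ∫ x : Sp d, (gradSq γ₁ (⇑P) x + gradSq γ₂ (⇑Q) x)
    ∧ (d = 3 → energyR γ₁ γ₂ (⇑P) (⇑Q) = 0
        ∧ (∫ x : Sp d, (gradSq γ₁ (⇑P) x + gradSq γ₂ (⇑Q) x))
            = ∫ x : Sp d, (P x) ^ 2 * Q x) := by
  have hvirial : ((d : ℝ) + 1) * ∫ x : Sp d, P x ^ 2 * Q x
      = 4 * ∫ x : Sp d, (gradSq γ₁ (⇑P) x + gradSq γ₂ (⇑Q) x) := by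
    simpa [gradSq_eq_weightedGradSq, finrank_euclideanSpace_fin] using
      finrank_mul_integral_eq_of_bound_state (μ := volume) (P := P) (Q := Q)
        (by simpa only [lap_eq_weightedLaplacian] using hP)
        (by simpa only [lap_eq_weightedLaplacian] using hQ)
  have henergy : energyR γ₁ γ₂ ⇑P ⇑Q = 1 / 2 * ((∫ x : Sp d,
      (gradSq γ₁ (⇑P) x + gradSq γ₂ (⇑Q) x)) - ∫ x : Sp d, P x ^ 2 * Q x) := by
    rw [energyR, integral_sub (by exact (integrable_gradSq γ₁ P).add (integrable_gradSq γ₂ Q))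
      (by exact (P * P * Q).integrable.congr (.of_forall fun x => by simp [sq]))]
  generalize ∫ x : Sp d, (gradSq γ₁ (⇑P) x + gradSq γ₂ (⇑Q) x) = K at *
  generalize ∫ x : Sp d, P x ^ 2 * Q x = J at *
  refine ⟨?_, fun hd => ?_⟩
  · rw [henergy]
    field_simp
    linear_combination -hvirial
  · subst hd
    norm_num at hvirial
    exact ⟨by rw [henergy]; linear_combination -hvirial / 2, by linear_combination -hvirial⟩

/-- energy of bound states when `β = 0`:
`E(P,Q) = ((d−3)/(2(d+1))) ∫(|∇P|²_{γ₁}+|∇Q|²_{γ₂})`; in particular for `d = 3`,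
`E(P,Q) = 0` and `∫(|∇P|²_{γ₁}+|∇Q|²_{γ₂}) = ∫P²Q`. -/
theorem bound_state_energy
    (d : ℕ) (hd : 1 ≤ d) (γ₁ γ₂ ω : ℝ) (hγ₁ : 0 < γ₁) (hγ₂ : 0 < γ₂)
    (P Q : SchwartzMap (Sp d) ℝ)
    (hP : ∀ x, -ω * P x + lap γ₁ (⇑P) x + P x * Q x = 0)
    (hQ : ∀ x, -(4 * ω) * Q x + lap γ₂ (⇑Q) x + (1 / 2) * (P x) ^ 2 = 0) :
    energyR γ₁ γ₂ (⇑P) (⇑Q)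
      = (((d : ℝ) - 3) / (2 * ((d : ℝ) + 1)))
          * ∫ x : Sp d, (gradSq γ₁ (⇑P) x + gradSq γ₂ (⇑Q) x)
    ∧ (d = 3 → energyR γ₁ γ₂ (⇑P) (⇑Q) = 0
        ∧ (∫ x : Sp d, (gradSq γ₁ (⇑P) x + gradSq γ₂ (⇑Q) x))
            = ∫ x : Sp d, (P x) ^ 2 * Q x) :=
  bound_state_energy_general d γ₁ γ₂ ω P Q hP hQ
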